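/- arXiv:2103.05702 — 3 statements merged into one kernel-verified Lean document; each statement's English description precedes it below -/
import Mathlib

section
/- Let H be a complex Hilbert space, let k be an integer with 0 < k < dim H − 1, and let X, Y be adjacent k-dimensional subspaces of H. A k-dimensional subspace Z of H with Z not contained in X + Y is ortho-adjacent to both X and Y if and only if Z = (X ∩ Y) + P for some 1-dimensional subspace P of H orthogonal to X + Y. -/
noncomputable section

open scoped Classical

variable {H : Type*} [NormedAddCommGroup H] [InnerProductSpace ℂ H] [CompleteSpace H]

/-- The orthogonal projection onto `X`, as an operator `H → H` (junk value `0` if the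
orthogonal projection onto `X` does not exist; it always exists for finite-dimensional,
and more generally complete, subspaces). -/
noncomputable def projOn (X : Submodule ℂ H) : H →L[ℂ] H :=
  if h : Submodule.HasOrthogonalProjection X then
    haveI := h
    X.subtypeL.comp (Submodule.orthogonalProjectionOnto X)
  else 0

/-- Two subspaces of `H` are compatible if their orthogonal projections commute. -/
def Compatible (X Y : Submodule ℂ H) : Prop :=
  projOn X * projOn Y = projOn Y * projOn X

/-- `X` is a `k`-dimensional subspace of `H`. -/
def IsDim (k : ℕ) (X : Submodule ℂ H) : Prop :=
  FiniteDimensional ℂ X ∧ Module.finrank ℂ X = k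

/-- Two (distinct) `k`-dimensional subspaces are adjacent if their intersection is
`(k-1)`-dimensional. -/
def AdjacentSub (k : ℕ) (X Y : Submodule ℂ H) : Prop :=
  X ≠ Y ∧ Module.finrank ℂ ↥(X ⊓ Y) = k - 1

/-- Ortho-adjacency: adjacent and compatible. -/
def OrthoAdjacent (k : ℕ) (X Y : Submodule ℂ H) : Prop :=
  AdjacentSub k X Y ∧ Compatible X Y

/-- The ortho-Grassmann graph `Γ⊥_k(H)` on the `k`-dimensional subspaces of `H`:
two `k`-dimensional subspaces are connected by an edge if they are ortho-adjacent. -/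
def orthoGrassmannGraph (H : Type*) [NormedAddCommGroup H] [InnerProductSpace ℂ H]
    [CompleteSpace H] (k : ℕ) : SimpleGraph {X : Submodule ℂ H // IsDim k X} where
  Adj X Y := OrthoAdjacent k X.1 Y.1
  symm := ⟨by
    rintro X Y ⟨⟨hne, hdim⟩, hc⟩
    refine ⟨⟨hne.symm, by rwa [inf_comm]⟩, ?_⟩
    unfold Compatible at hc ⊢
    exact hc.symm⟩
  loopless := ⟨fun X h => h.1.1 rfl⟩

/-- The Grassmann graph `Γ_k(H)` on the `k`-dimensional subspaces of `H`:
two `k`-dimensional subspaces are connected by an edge if they are adjacent. -/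
def grassmannGraph (H : Type*) [NormedAddCommGroup H] [InnerProductSpace ℂ H]
    [CompleteSpace H] (k : ℕ) : SimpleGraph {X : Submodule ℂ H // IsDim k X} where
  Adj X Y := AdjacentSub k X.1 Y.1
  symm := ⟨by
    rintro X Y ⟨hne, hdim⟩
    exact ⟨hne.symm, by rwa [inf_comm]⟩⟩
  loopless := ⟨fun X h => h.1 rfl⟩

/-! Compatibility of `Z` with `X` amounts to `Z = (Z ⊓ X) ⊔ (Z ⊓ Xᗮ)`, i.e. to `Z` being invariant
under the projection onto `X`. If `Z` is ortho-adjacent to `X` and `Y`, the hyperplanes `Z ⊓ X`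
and `Z ⊓ Y` of `Z` coincide, as otherwise they would span `Z ≤ X ⊔ Y`; so both are `X ⊓ Y`, and
the orthogonal complement of `X ⊓ Y` in `Z` is the line `Z ⊓ Xᗮ = Z ⊓ Yᗮ ≤ (X ⊔ Y)ᗮ`.
Conversely, by the modular law `(X ⊓ Y) ⊔ P` meets `X` in `X ⊓ Y`, and it splits along `X`, `Xᗮ`. -/

open Module

namespace Submodule

theorem sup_eq_of_ne_of_finrank_eq_pred {K V : Type*} [DivisionRing K]
    [AddCommGroup V] [Module K V] {A B Z : Submodule K V} [FiniteDimensional K Z]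
    (hA : A ≤ Z) (hB : B ≤ Z) (hne : A ≠ B) (hAr : finrank K A = finrank K Z - 1)
    (hBr : finrank K B = finrank K Z - 1) : A ⊔ B = Z := by
  have : FiniteDimensional K A := finiteDimensional_of_le hA
  have : FiniteDimensional K ↥(A ⊔ B) := finiteDimensional_of_le (sup_le hA hB)
  have hlt : A < A ⊔ B := by
    refine lt_of_le_of_ne le_sup_left fun h => hne ?_
    exact (eq_of_le_of_finrank_le (h ▸ le_sup_right) (by rw [hAr, hBr])).symm
  have := finrank_lt_finrank_of_lt hlt
  exact eq_of_le_of_finrank_le (sup_le hA hB) (by omega)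

section InnerProductSpace

variable {𝕜 E : Type*} [RCLike 𝕜] [NormedAddCommGroup E] [InnerProductSpace 𝕜 E]

theorem inf_orthogonal_eq_of_sup_eq {W P Z : Submodule 𝕜 E} (hZ : W ⊔ P = Z)
    (hP : P ≤ Wᗮ) : Z ⊓ Wᗮ = P := by
  refine le_antisymm ?_ (le_inf (hZ ▸ le_sup_right) hP)
  rintro z ⟨hzZ, hzW⟩
  obtain ⟨w, hw, p, hp, rfl⟩ := mem_sup.1 (hZ ▸ hzZ)
  have hw' : w ∈ Wᗮ := by simpa using Wᗮ.sub_mem hzW (hP hp)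
  obtain rfl : w = 0 := disjoint_def.1 (orthogonal_disjoint W) w hw hw'
  simpa using hp

theorem finrank_sup_of_le_orthogonal {W P : Submodule 𝕜 E} [FiniteDimensional 𝕜 W]
    [FiniteDimensional 𝕜 P] (hP : P ≤ Wᗮ) :
    finrank 𝕜 ↥(W ⊔ P) = finrank 𝕜 W + finrank 𝕜 P := by
  have hbot : W ⊓ P = ⊥ := eq_bot_iff.2 ((inf_le_inf_left W hP).trans W.inf_orthogonal_eq_bot.le)
  have := finrank_sup_add_finrank_inf_eq W P
  rwa [hbot, finrank_bot, add_zero] at this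

theorem sup_inf_eq_of_le_orthogonal {W P X : Submodule 𝕜 E} (hW : W ≤ X)
    (hP : P ≤ Xᗮ) : (W ⊔ P) ⊓ X = W := by
  rw [sup_inf_assoc_of_le P hW, inf_comm,
    eq_bot_iff.2 ((inf_le_inf_left X hP).trans X.inf_orthogonal_eq_bot.le), sup_bot_eq]

end InnerProductSpace

end Submodule

section Compatible

variable {E : Type*} [NormedAddCommGroup E] [InnerProductSpace ℂ E]

theorem projOn_eq_starProjection (X : Submodule ℂ E) [X.HasOrthogonalProjection] :
    projOn X = X.starProjection := by
  rw [projOn, dif_pos ‹_›, Submodule.starProjection]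

variable {Z X : Submodule ℂ E} [Z.HasOrthogonalProjection] [X.HasOrthogonalProjection]

theorem compatible_iff_forall_starProjection_mem :
    Compatible Z X ↔ ∀ z ∈ Z, X.starProjection z ∈ Z := by
  simp only [Compatible, projOn_eq_starProjection]
  constructor
  · intro h z hz
    have : Z.starProjection (X.starProjection z) = X.starProjection (Z.starProjection z) :=
      DFunLike.congr_fun h z
    rw [Submodule.starProjection_eq_self_iff.2 hz] at this
    exact this ▸ Z.starProjection_apply_mem _
  · intro h
    ext x
    -- `Zᗮ` is invariant as well, since the projection onto `X` is self-adjoint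
    change Z.starProjection (X.starProjection x) = X.starProjection (Z.starProjection x)
    have hw : X.starProjection (x - Z.starProjection x) ∈ Zᗮ := fun z hz => by
      rw [← Submodule.inner_starProjection_left_eq_right]
      exact Submodule.inner_right_of_mem_orthogonal (h z hz)
        (Z.sub_starProjection_mem_orthogonal x)
    have hx : X.starProjection x =
        X.starProjection (Z.starProjection x) + X.starProjection (x - Z.starProjection x) := by
      rw [← map_add, add_sub_cancel]
    rw [hx, map_add, (Z.starProjection_apply_eq_zero_iff).2 hw, add_zero,
      Submodule.starProjection_eq_self_iff.2 (h _ (Z.starProjection_apply_mem x))]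

theorem compatible_iff_inf_sup_inf_orthogonal_eq : Compatible Z X ↔ Z ⊓ X ⊔ Z ⊓ Xᗮ = Z := by
  rw [compatible_iff_forall_starProjection_mem]
  refine ⟨fun h => le_antisymm (sup_le inf_le_left inf_le_left) fun z hz => ?_, fun h z hz => ?_⟩
  · have hXz : X.starProjection z ∈ Z ⊓ X := ⟨h z hz, X.starProjection_apply_mem z⟩
    have hXz' : z - X.starProjection z ∈ Z ⊓ Xᗮ :=
      ⟨Z.sub_mem hz hXz.1, X.sub_starProjection_mem_orthogonal z⟩
    simpa using Submodule.add_mem_sup hXz hXz'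
  · obtain ⟨a, ha, b, hb, rfl⟩ := Submodule.mem_sup.1 (h.symm ▸ hz)
    rw [map_add, Submodule.starProjection_eq_self_iff.2 ha.2,
      (X.starProjection_apply_eq_zero_iff).2 hb.2, add_zero]
    exact ha.1

theorem Compatible.inf_orthogonal_inf_eq (h : Compatible Z X) : Z ⊓ (Z ⊓ X)ᗮ = Z ⊓ Xᗮ :=
  Submodule.inf_orthogonal_eq_of_sup_eq (compatible_iff_inf_sup_inf_orthogonal_eq.1 h)
    (inf_le_right.trans (Submodule.orthogonal_le inf_le_right))

end Compatible

section OrthoAdjacent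

variable {E : Type*} [NormedAddCommGroup E] [InnerProductSpace ℂ E] {k : ℕ}

theorem orthoAdjacent_sup_of_le_of_le_orthogonal {W P X : Submodule ℂ E}
    [(W ⊔ P).HasOrthogonalProjection] [X.HasOrthogonalProjection] (hW : W ≤ X) (hP : P ≤ Xᗮ)
    (hne : W ⊔ P ≠ X) (hWr : finrank ℂ W = k - 1) : OrthoAdjacent k (W ⊔ P) X := by
  refine ⟨⟨hne, by rw [Submodule.sup_inf_eq_of_le_orthogonal hW hP, hWr]⟩, ?_⟩
  refine compatible_iff_inf_sup_inf_orthogonal_eq.2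
    (le_antisymm (sup_le inf_le_left inf_le_left) ?_)
  exact sup_le_sup (le_inf le_sup_left hW) (le_inf le_sup_right hP)

theorem exists_eq_inf_sup_of_orthoAdjacent {X Y Z : Submodule ℂ E} [FiniteDimensional ℂ X]
    [FiniteDimensional ℂ Y] [FiniteDimensional ℂ Z] (hk : 0 < k)
    (hZr : finrank ℂ Z = k) (hXY : finrank ℂ ↥(X ⊓ Y) = k - 1)
    (hZnle : ¬ Z ≤ X ⊔ Y) (hZX : OrthoAdjacent k Z X) (hZY : OrthoAdjacent k Z Y) :
    ∃ P : Submodule ℂ E, IsDim 1 P ∧ P ≤ (X ⊔ Y)ᗮ ∧ Z = (X ⊓ Y) ⊔ P := by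
  obtain ⟨⟨-, hZXr⟩, hcX⟩ := hZX
  obtain ⟨⟨-, hZYr⟩, hcY⟩ := hZY
  have hZX_eq_ZY : Z ⊓ X = Z ⊓ Y := by
    by_contra hne
    refine hZnle ?_
    rw [← Submodule.sup_eq_of_ne_of_finrank_eq_pred inf_le_left inf_le_left hne
      (by rw [hZXr, hZr]) (by rw [hZYr, hZr])]
    exact sup_le_sup inf_le_right inf_le_right
  have hW : Z ⊓ X = X ⊓ Y := Submodule.eq_of_le_of_finrank_eq
    (le_inf inf_le_right (hZX_eq_ZY ▸ inf_le_right)) (by rw [hZXr, hXY])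
  have hPX : Z ⊓ (X ⊓ Y)ᗮ = Z ⊓ Xᗮ := hW ▸ hcX.inf_orthogonal_inf_eq
  have hPY : Z ⊓ (X ⊓ Y)ᗮ = Z ⊓ Yᗮ := (hZX_eq_ZY.symm.trans hW) ▸ hcY.inf_orthogonal_inf_eq
  have hZ : Z = X ⊓ Y ⊔ Z ⊓ (X ⊓ Y)ᗮ := by
    rw [hPX, ← hW]
    exact (compatible_iff_inf_sup_inf_orthogonal_eq.1 hcX).symm
  refine ⟨Z ⊓ (X ⊓ Y)ᗮ, ⟨inferInstance, ?_⟩, ?_, hZ⟩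
  · have := Submodule.finrank_sup_of_le_orthogonal (inf_le_right : Z ⊓ (X ⊓ Y)ᗮ ≤ (X ⊓ Y)ᗮ)
    rw [← hZ, hZr, hXY] at this
    omega
  · rw [← Submodule.inf_orthogonal]
    exact le_inf (hPX ▸ inf_le_right) (hPY ▸ inf_le_right)

end OrthoAdjacent

theorem orthoAdjacent_to_both_iff_of_not_le_sup_general
    (k : ℕ) (hk : 0 < k)
    (X Y Z : Submodule ℂ H) (hX : IsDim k X) (hY : IsDim k Y) (hZ : IsDim k Z)
    (hXY : AdjacentSub k X Y) (hZnle : ¬ Z ≤ X ⊔ Y) :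
    (OrthoAdjacent k Z X ∧ OrthoAdjacent k Z Y) ↔
      ∃ P : Submodule ℂ H, IsDim 1 P ∧ P ≤ (X ⊔ Y)ᗮ ∧ Z = (X ⊓ Y) ⊔ P := by
  obtain ⟨hXfin, -⟩ := hX
  obtain ⟨hYfin, -⟩ := hY
  obtain ⟨hZfin, hZr⟩ := hZ
  refine ⟨fun ⟨hZX, hZY⟩ => exists_eq_inf_sup_of_orthoAdjacent hk hZr hXY.2 hZnle hZX hZY, ?_⟩
  rintro ⟨P, ⟨hPfin, -⟩, hP, rfl⟩
  have hPX : P ≤ Xᗮ := hP.trans (Submodule.orthogonal_le le_sup_left)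
  have hPY : P ≤ Yᗮ := hP.trans (Submodule.orthogonal_le le_sup_right)
  exact ⟨orthoAdjacent_sup_of_le_of_le_orthogonal inf_le_left hPX
      (fun h => hZnle (h.le.trans le_sup_left)) hXY.2,
    orthoAdjacent_sup_of_le_of_le_orthogonal inf_le_right hPY
      (fun h => hZnle (h.le.trans le_sup_right)) hXY.2⟩

/-- Let `X, Y` be adjacent `k`-dimensional subspaces of `H` with `k < dim H - 1`.
A `k`-dimensional subspace `Z ⊄ X + Y` is ortho-adjacent to both `X, Y` if and only if
`Z = (X ∩ Y) + P` for some `1`-dimensional subspace `P` orthogonal to `X + Y`. -/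
theorem orthoAdjacent_to_both_iff_of_not_le_sup
    (k : ℕ) (hk : 0 < k) (hkH : (k : Cardinal) + 1 < Module.rank ℂ H)
    (X Y Z : Submodule ℂ H) (hX : IsDim k X) (hY : IsDim k Y) (hZ : IsDim k Z)
    (hXY : AdjacentSub k X Y) (hZnle : ¬ Z ≤ X ⊔ Y) :
    (OrthoAdjacent k Z X ∧ OrthoAdjacent k Z Y) ↔
      ∃ P : Submodule ℂ H, IsDim 1 P ∧ P ≤ (X ⊔ Y)ᗮ ∧ Z = (X ⊓ Y) ⊔ P :=
  orthoAdjacent_to_both_iff_of_not_le_sup_general k hk X Y Z hX hY hZ hXY hZnle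

end
end

section
/- Let H be a complex Hilbert space, let k ≥ 2, and let X, Y be compatible k-dimensional subspaces of H with dim(X ∩ Y) = k − 2. Then for every k-dimensional subspace Z of H that is ortho-adjacent to both X and Y, there are precisely two k-dimensional subspaces of H that are ortho-adjacent to each of X, Y and Z. -/
noncomputable section

open scoped Classical

variable {H : Type*} [NormedAddCommGroup H] [InnerProductSpace ℂ H] [CompleteSpace H]

/-!
Put `W = X ⊓ Y`. Compatibility splits `X = W ⊕ A` and `Y = W ⊕ B` with planes `A ⟂ Y` and
`B ⟂ X`, and a common ortho-neighbour `V` of `X` and `Y` is `W ⊕ a ⊕ b` for lines `a ≤ A`,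
`b ≤ B`, where `V ⊓ X = W ⊕ a` and `V ⊓ Xᗮ = b`. If `V` is also ortho-adjacent to
`Z = W ⊕ a₀ ⊕ b₀`, then `V ⊓ Z` is compatible with `X`, and its dimension `k - 1` forces
`a = a₀` or `b = b₀`. If `a = a₀`, then `V ⊓ Z = V ⊓ X`, so compatibility of `V` and `Z` makes
`b = V ⊓ (V ⊓ Z)ᗮ` orthogonal to `Z`: `b` is the line of `B` orthogonal to `b₀`. Hence the
common ortho-neighbours of `X`, `Y`, `Z` are exactly `W ⊕ a₀ ⊕ (B ⊖ b₀)` and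
`W ⊕ (A ⊖ a₀) ⊕ b₀`.
-/

open Module Submodule

theorem sup_inf_eq_of_le_of_disjoint {α : Type*} [Lattice α] [OrderBot α] [IsModularLattice α]
    {a b c : α} (ha : a ≤ c) (hb : Disjoint b c) : (a ⊔ b) ⊓ c = a := by
  rw [sup_inf_assoc_of_le b ha, hb.eq_bot, sup_bot_eq]

section FiniteDimensional

variable {K E : Type*} [DivisionRing K] [AddCommGroup E] [Module K E]

theorem finrank_sup_of_disjoint {S T : Submodule K E} [FiniteDimensional K S]
    [FiniteDimensional K T] (h : Disjoint S T) :
    finrank K ↥(S ⊔ T) = finrank K S + finrank K T := by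
  rw [← finrank_sup_add_finrank_inf_eq, h.eq_bot, finrank_bot, add_zero]

theorem inf_le_and_inf_sup_inf_eq_of_finrank {k : ℕ} (hk : 2 ≤ k) {X Y V : Submodule K E}
    [FiniteDimensional K V] [FiniteDimensional K ↥(X ⊓ Y)] (hV : finrank K V = k)
    (hVX : finrank K ↥(V ⊓ X) = k - 1) (hVY : finrank K ↥(V ⊓ Y) = k - 1)
    (hXY : finrank K ↥(X ⊓ Y) = k - 2) : X ⊓ Y ≤ V ∧ V ⊓ X ⊔ V ⊓ Y = V := by
  have hsum := finrank_sup_add_finrank_inf_eq (V ⊓ X) (V ⊓ Y)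
  rw [← inf_inf_distrib_left, hVX, hVY] at hsum
  have hsup : finrank K ↥(V ⊓ X ⊔ V ⊓ Y) ≤ k :=
    hV ▸ finrank_mono (sup_le inf_le_left inf_le_left)
  have hinf : finrank K ↥(V ⊓ (X ⊓ Y)) ≤ k - 2 := hXY ▸ finrank_mono inf_le_right
  refine ⟨?_, eq_of_le_of_finrank_le (sup_le inf_le_left inf_le_left) (by omega)⟩
  rw [← eq_of_le_of_finrank_le (inf_le_right : V ⊓ (X ⊓ Y) ≤ X ⊓ Y) (by omega)]
  exact inf_le_left

end FiniteDimensional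

section Compatible

variable {U V W : Submodule ℂ H}

omit [CompleteSpace H] in
theorem projOn_eq_starProjection_s8 (K : Submodule ℂ H) [K.HasOrthogonalProjection] :
    projOn K = K.starProjection := by
  rw [projOn, dif_pos ‹_›]
  rfl

omit [CompleteSpace H] in
theorem Compatible.symm (h : Compatible U V) : Compatible V U :=
  Eq.symm h

theorem compatible_iff_forall_starProjection_mem_s8 [U.HasOrthogonalProjection]
    [V.HasOrthogonalProjection] : Compatible U V ↔ ∀ x ∈ U, V.starProjection x ∈ U := by
  rw [Compatible, projOn_eq_starProjection_s8, projOn_eq_starProjection_s8]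
  constructor
  · intro h x hx
    rw [← (U.starProjection_eq_self_iff).2 hx]
    change (V.starProjection * U.starProjection) x ∈ U
    rw [← h]
    exact U.starProjection_apply_mem _
  · intro h
    have hUVU : U.starProjection * V.starProjection * U.starProjection =
        V.starProjection * U.starProjection := by
      ext x
      exact (U.starProjection_eq_self_iff).2 (h _ (U.starProjection_apply_mem x))
    have hU := (isSelfAdjoint_starProjection U).star_eq
    have hV := (isSelfAdjoint_starProjection V).star_eq
    -- `hUVU` has a self-adjoint left side; take adjoints
    calc U.starProjection * V.starProjection
        = star (V.starProjection * U.starProjection) := by rw [star_mul, hU, hV]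
      _ = U.starProjection * V.starProjection * U.starProjection := by
        rw [← hUVU, star_mul, star_mul, hU, hV, mul_assoc]
      _ = V.starProjection * U.starProjection := hUVU

theorem compatible_iff_inf_sup_inf_orthogonal [U.HasOrthogonalProjection]
    [V.HasOrthogonalProjection] : Compatible U V ↔ U ⊓ V ⊔ U ⊓ Vᗮ = U := by
  rw [compatible_iff_forall_starProjection_mem_s8]
  constructor
  · refine fun h => le_antisymm (sup_le inf_le_left inf_le_left) fun x hx => ?_
    rw [← add_sub_cancel (V.starProjection x) x]
    exact add_mem_sup ⟨h x hx, V.starProjection_apply_mem x⟩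
      ⟨U.sub_mem hx (h x hx), V.sub_starProjection_mem_orthogonal x⟩
  · intro h x hx
    rw [← h] at hx
    obtain ⟨y, hy, z, hz, rfl⟩ := mem_sup.1 hx
    rw [map_add, (V.starProjection_eq_self_iff).2 hy.2,
      (V.starProjection_apply_eq_zero_iff).2 hz.2, add_zero]
    exact hy.1

theorem Compatible.inf [U.HasOrthogonalProjection] [V.HasOrthogonalProjection]
    [W.HasOrthogonalProjection] [(U ⊓ W).HasOrthogonalProjection] (hU : Compatible U V)
    (hW : Compatible W V) : Compatible (U ⊓ W) V := by
  rw [compatible_iff_forall_starProjection_mem_s8] at hU hW ⊢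
  exact fun x hx => ⟨hU x hx.1, hW x hx.2⟩

theorem Compatible.inf_orthogonal_inf [U.HasOrthogonalProjection] [V.HasOrthogonalProjection]
    (h : Compatible U V) : U ⊓ (U ⊓ V)ᗮ = U ⊓ Vᗮ := by
  nth_rw 1 [← compatible_iff_inf_sup_inf_orthogonal.1 h, sup_comm]
  exact sup_inf_eq_of_le_of_disjoint (inf_le_right.trans (orthogonal_le inf_le_right))
    (orthogonal_disjoint _)

theorem Compatible.sup_inf_orthogonal [U.HasOrthogonalProjection] [V.HasOrthogonalProjection]
    (h : Compatible V U) : (U ⊔ V) ⊓ Uᗮ = V ⊓ Uᗮ := by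
  have hV : V ≤ V ⊓ Uᗮ ⊔ U := calc
    V = V ⊓ U ⊔ V ⊓ Uᗮ := (compatible_iff_inf_sup_inf_orthogonal.1 h).symm
    _ ≤ V ⊓ Uᗮ ⊔ U := sup_le (inf_le_right.trans le_sup_right) le_sup_left
  rw [le_antisymm (sup_le le_sup_right hV) (sup_le (inf_le_left.trans le_sup_right) le_sup_left)]
  exact sup_inf_eq_of_le_of_disjoint inf_le_right (orthogonal_disjoint U)

theorem compatible_sup_of_le_of_isOrtho {S T : Submodule ℂ H} [V.HasOrthogonalProjection]
    [(S ⊔ T).HasOrthogonalProjection] (hS : S ≤ V) (hT : T ⟂ V) : Compatible (S ⊔ T) V := by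
  rw [compatible_iff_inf_sup_inf_orthogonal]
  exact le_antisymm (sup_le inf_le_left inf_le_left)
    (sup_le_sup (le_inf le_sup_left hS) (le_inf le_sup_right (isOrtho_iff_le.1 hT)))

end Compatible

section OrthoAdjacent

variable {k : ℕ} {S T V X Z : Submodule ℂ H}

theorem OrthoAdjacent.finrank_inf_orthogonal [X.HasOrthogonalProjection] (hk : k ≠ 0)
    (hV : IsDim k V) (h : OrthoAdjacent k V X) : finrank ℂ ↥(V ⊓ Xᗮ) = 1 := by
  have := hV.1
  have hsum := finrank_sup_of_disjoint
    ((orthogonal_disjoint X).mono inf_le_right inf_le_right : Disjoint (V ⊓ X) (V ⊓ Xᗮ))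
  rw [compatible_iff_inf_sup_inf_orthogonal.1 h.2, hV.2, h.1.2] at hsum
  omega

theorem OrthoAdjacent.inf_orthogonal_eq_of_inf_ne [X.HasOrthogonalProjection] (hk : k ≠ 0)
    (hV : IsDim k V) (hZ : IsDim k Z) (hVX : OrthoAdjacent k V X) (hZX : OrthoAdjacent k Z X)
    (hVZ : finrank ℂ ↥(V ⊓ Z) = k - 1) (hne : V ⊓ X ≠ Z ⊓ X) : V ⊓ Xᗮ = Z ⊓ Xᗮ := by
  have := hV.1
  have := hZ.1
  have hsum := finrank_sup_of_disjoint ((orthogonal_disjoint X).mono inf_le_right inf_le_right :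
    Disjoint (V ⊓ Z ⊓ X) (V ⊓ Z ⊓ Xᗮ))
  rw [compatible_iff_inf_sup_inf_orthogonal.1 (hVX.2.inf hZX.2), hVZ] at hsum
  have hlt : finrank ℂ ↥(V ⊓ Z ⊓ X) < k - 1 := by
    rw [← hVX.1.2]
    refine finrank_lt_finrank_of_lt
      (lt_of_le_of_ne (inf_le_inf_right X inf_le_left) fun h => hne ?_)
    exact eq_of_le_of_finrank_eq (h ▸ inf_le_inf_right X inf_le_right)
      (by rw [hVX.1.2, hZX.1.2])
  have heq {L : Submodule ℂ H} [FiniteDimensional ℂ L] (hle : V ⊓ Z ⊓ Xᗮ ≤ L)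
      (hL : finrank ℂ L = 1) : V ⊓ Z ⊓ Xᗮ = L :=
    eq_of_le_of_finrank_le hle (by omega)
  rw [← heq (inf_le_inf_right _ inf_le_left) (hVX.finrank_inf_orthogonal hk hV),
    ← heq (inf_le_inf_right _ inf_le_right) (hZX.finrank_inf_orthogonal hk hZ)]

theorem orthoAdjacent_sup_of_le_of_isOrtho [FiniteDimensional ℂ S] [FiniteDimensional ℂ T]
    (hk : k ≠ 0) (hV : IsDim k V) (hS : S ≤ V) (hT : T ⟂ V) (hSk : finrank ℂ S = k - 1) :
    OrthoAdjacent k (S ⊔ T) V := by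
  have := hV.1
  have hinf : (S ⊔ T) ⊓ V = S := sup_inf_eq_of_le_of_disjoint hS hT.disjoint
  refine ⟨⟨fun h => ?_, by rw [hinf, hSk]⟩, compatible_sup_of_le_of_isOrtho hS hT⟩
  rw [h, inf_idem] at hinf
  have := hV.2
  rw [hinf, hSk] at this
  omega

end OrthoAdjacent

structure IsCompatibleCodimTwo (k : ℕ) (X Y : Submodule ℂ H) : Prop where
  two_le : 2 ≤ k
  isDim_left : IsDim k X
  isDim_right : IsDim k Y
  compatible : Compatible X Y
  finrank_inf : finrank ℂ ↥(X ⊓ Y) = k - 2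

structure IsCommonOrthoNeighbour (k : ℕ) (X Y V : Submodule ℂ H) : Prop where
  isDim : IsDim k V
  left : OrthoAdjacent k V X
  right : OrthoAdjacent k V Y

omit [CompleteSpace H] in
theorem IsCommonOrthoNeighbour.symm {k : ℕ} {X Y V : Submodule ℂ H}
    (h : IsCommonOrthoNeighbour k X Y V) : IsCommonOrthoNeighbour k Y X V :=
  ⟨h.isDim, h.right, h.left⟩

/-- In the notation of the header, `W ⊕ a₀ ⊕ (B ⊖ b₀)`. -/
def orthoPartner (X Y Z : Submodule ℂ H) : Submodule ℂ H :=
  Z ⊓ X ⊔ (Z ⊓ Y)ᗮ ⊓ Y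

namespace IsCompatibleCodimTwo

variable {k : ℕ} {X Y V Z : Submodule ℂ H}

omit [CompleteSpace H] in
theorem symm (F : IsCompatibleCodimTwo k X Y) : IsCompatibleCodimTwo k Y X :=
  ⟨F.two_le, F.isDim_right, F.isDim_left, F.compatible.symm, inf_comm X Y ▸ F.finrank_inf⟩

omit [CompleteSpace H] in
theorem inf_le_and_inf_sup_inf_eq (F : IsCompatibleCodimTwo k X Y)
    (hV : IsCommonOrthoNeighbour k X Y V) : X ⊓ Y ≤ V ∧ V ⊓ X ⊔ V ⊓ Y = V :=
  have := hV.isDim.1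
  have := F.isDim_left.1
  inf_le_and_inf_sup_inf_eq_of_finrank F.two_le hV.isDim.2 hV.left.1.2 hV.right.1.2
    F.finrank_inf

theorem inf_orthogonal_le (F : IsCompatibleCodimTwo k X Y)
    (hV : IsCommonOrthoNeighbour k X Y V) : V ⊓ Xᗮ ≤ Y := by
  have := F.isDim_left.1
  have := F.isDim_right.1
  calc V ⊓ Xᗮ ≤ (X ⊔ Y) ⊓ Xᗮ := by
        refine inf_le_inf_right _ ?_
        rw [← (F.inf_le_and_inf_sup_inf_eq hV).2]
        exact sup_le_sup inf_le_right inf_le_right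
    _ = Y ⊓ Xᗮ := F.compatible.symm.sup_inf_orthogonal
    _ ≤ Y := inf_le_left

theorem inf_eq_sup_inf_orthogonal (F : IsCompatibleCodimTwo k X Y)
    (hV : IsCommonOrthoNeighbour k X Y V) : V ⊓ Y = X ⊓ Y ⊔ V ⊓ Xᗮ := by
  have := hV.isDim.1
  have := F.isDim_left.1
  refine (eq_of_le_of_finrank_eq (sup_le (le_inf (F.inf_le_and_inf_sup_inf_eq hV).1
    inf_le_right) (le_inf inf_le_left (F.inf_orthogonal_le hV))) ?_).symm
  rw [finrank_sup_of_disjoint ((orthogonal_disjoint X).mono inf_le_left inf_le_right),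
    F.finrank_inf, hV.left.finrank_inf_orthogonal (by have := F.two_le; omega) hV.isDim,
    hV.right.1.2]
  have := F.two_le
  omega

theorem inf_eq_or_inf_eq (F : IsCompatibleCodimTwo k X Y) (hV : IsCommonOrthoNeighbour k X Y V)
    (hZ : IsCommonOrthoNeighbour k X Y Z) (hVZ : OrthoAdjacent k V Z) :
    V ⊓ X = Z ⊓ X ∨ V ⊓ Y = Z ⊓ Y := by
  have := F.isDim_left.1
  refine or_iff_not_imp_left.2 fun hne => ?_
  rw [F.inf_eq_sup_inf_orthogonal hV, F.inf_eq_sup_inf_orthogonal hZ,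
    hV.left.inf_orthogonal_eq_of_inf_ne (by have := F.two_le; omega) hV.isDim hZ.isDim hZ.left
      hVZ.1.2 hne]

theorem orthogonal_inf_le_orthogonal (F : IsCompatibleCodimTwo k X Y)
    (hZ : IsCommonOrthoNeighbour k X Y Z) : (Z ⊓ Y)ᗮ ⊓ Y ≤ Xᗮ := by
  have := F.isDim_left.1
  have := F.isDim_right.1
  calc (Z ⊓ Y)ᗮ ⊓ Y ≤ Y ⊓ (Y ⊓ X)ᗮ := by
        rw [inf_comm]
        exact inf_le_inf_left Y (orthogonal_le
          (le_inf (inf_comm X Y ▸ (F.inf_le_and_inf_sup_inf_eq hZ).1) inf_le_left))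
    _ = Y ⊓ Xᗮ := F.compatible.symm.inf_orthogonal_inf
    _ ≤ Xᗮ := inf_le_right

omit [CompleteSpace H] in
theorem finrank_orthogonal_inf (F : IsCompatibleCodimTwo k X Y)
    (hZ : IsCommonOrthoNeighbour k X Y Z) : finrank ℂ ↥((Z ⊓ Y)ᗮ ⊓ Y) = 1 := by
  have := F.isDim_right.1
  refine finrank_add_inf_finrank_orthogonal' inf_le_right ?_
  rw [hZ.right.1.2, F.isDim_right.2]
  have := F.two_le
  omega

theorem orthogonal_inf_isOrtho (F : IsCompatibleCodimTwo k X Y)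
    (hZ : IsCommonOrthoNeighbour k X Y Z) : (Z ⊓ Y)ᗮ ⊓ Y ⟂ Z :=
  (isOrtho_sup_right.2 ⟨(isOrtho_iff_le.2 (F.orthogonal_inf_le_orthogonal hZ)).mono_right
    inf_le_right, isOrtho_iff_le.2 inf_le_left⟩).mono_right (F.inf_le_and_inf_sup_inf_eq hZ).2.ge

theorem orthoPartner_inf (F : IsCompatibleCodimTwo k X Y) (hZ : IsCommonOrthoNeighbour k X Y Z) :
    orthoPartner X Y Z ⊓ Z = Z ⊓ X :=
  sup_inf_eq_of_le_of_disjoint inf_le_left (F.orthogonal_inf_isOrtho hZ).disjoint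

theorem orthoPartner_ne (F : IsCompatibleCodimTwo k X Y) (hZ : IsCommonOrthoNeighbour k X Y Z) :
    orthoPartner X Y Z ≠ orthoPartner Y X Z := by
  intro h
  have hXY : Z ⊓ X = Z ⊓ Y := by
    rw [← F.orthoPartner_inf hZ, h, F.symm.orthoPartner_inf hZ.symm]
  have hZX : Z ⊓ X = Z := by
    simpa only [← hXY, sup_idem] using (F.inf_le_and_inf_sup_inf_eq hZ).2
  have := hZ.isDim.2
  rw [← hZX, hZ.left.1.2] at this
  have := F.two_le
  omega

theorem isCommonOrthoNeighbour_orthoPartner (F : IsCompatibleCodimTwo k X Y)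
    (hZ : IsCommonOrthoNeighbour k X Y Z) : IsCommonOrthoNeighbour k X Y (orthoPartner X Y Z) := by
  have := hZ.isDim.1
  have := F.isDim_left.1
  have := F.isDim_right.1
  have hk := F.two_le
  have hL := F.orthogonal_inf_le_orthogonal hZ
  have hL1 := F.finrank_orthogonal_inf hZ
  refine ⟨⟨by unfold orthoPartner; infer_instance, ?_⟩, ?_, ?_⟩
  · rw [orthoPartner, finrank_sup_of_disjoint ((orthogonal_disjoint X).mono inf_le_right hL),
      hZ.left.1.2, hL1]
    omega
  · exact orthoAdjacent_sup_of_le_of_isOrtho (by omega) F.isDim_left inf_le_right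
      (isOrtho_iff_le.2 hL) hZ.left.1.2
  · have hM : (X ⊓ Y)ᗮ ⊓ (Z ⊓ X) ≤ Yᗮ := calc
      (X ⊓ Y)ᗮ ⊓ (Z ⊓ X) ≤ X ⊓ (X ⊓ Y)ᗮ := le_inf (inf_le_right.trans inf_le_right) inf_le_left
      _ = X ⊓ Yᗮ := F.compatible.inf_orthogonal_inf
      _ ≤ Yᗮ := inf_le_right
    have hP : orthoPartner X Y Z = X ⊓ Y ⊔ (Z ⊓ Y)ᗮ ⊓ Y ⊔ (X ⊓ Y)ᗮ ⊓ (Z ⊓ X) := calc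
      orthoPartner X Y Z = X ⊓ Y ⊔ (X ⊓ Y)ᗮ ⊓ (Z ⊓ X) ⊔ (Z ⊓ Y)ᗮ ⊓ Y := by
        rw [sup_orthogonal_inf_of_hasOrthogonalProjection
          (le_inf (F.inf_le_and_inf_sup_inf_eq hZ).1 inf_le_left)]
        rfl
      _ = _ := sup_right_comm _ _ _
    rw [hP]
    refine orthoAdjacent_sup_of_le_of_isOrtho (by omega) F.isDim_right
      (sup_le inf_le_right inf_le_right) (isOrtho_iff_le.2 hM) ?_
    rw [finrank_sup_of_disjoint ((orthogonal_disjoint X).mono inf_le_left hL), F.finrank_inf, hL1]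
    omega

theorem orthoAdjacent_orthoPartner (F : IsCompatibleCodimTwo k X Y)
    (hZ : IsCommonOrthoNeighbour k X Y Z) : OrthoAdjacent k (orthoPartner X Y Z) Z := by
  have := hZ.isDim.1
  have := F.isDim_right.1
  exact orthoAdjacent_sup_of_le_of_isOrtho (by have := F.two_le; omega) hZ.isDim inf_le_left
    (F.orthogonal_inf_isOrtho hZ) hZ.left.1.2

theorem eq_orthoPartner_of_inf_eq (F : IsCompatibleCodimTwo k X Y)
    (hV : IsCommonOrthoNeighbour k X Y V) (hZ : IsCommonOrthoNeighbour k X Y Z)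
    (hVZ : OrthoAdjacent k V Z) (h : V ⊓ X = Z ⊓ X) : V = orthoPartner X Y Z := by
  have := hV.isDim.1
  have := hZ.isDim.1
  have := F.isDim_left.1
  have := F.isDim_right.1
  have hP := (F.isCommonOrthoNeighbour_orthoPartner hZ).isDim
  have := hP.1
  have hVZX : V ⊓ Z = V ⊓ X := (eq_of_le_of_finrank_eq
    (le_inf inf_le_left (h.le.trans inf_le_left)) (by rw [hV.left.1.2, hVZ.1.2])).symm
  have hperp : V ⊓ Xᗮ ≤ Zᗮ := by
    rw [← hV.left.2.inf_orthogonal_inf, ← hVZX, hVZ.2.inf_orthogonal_inf]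
    exact inf_le_right
  have hle : V ≤ orthoPartner X Y Z := calc
    V = V ⊓ X ⊔ V ⊓ Xᗮ := (compatible_iff_inf_sup_inf_orthogonal.1 hV.left.2).symm
    _ ≤ orthoPartner X Y Z := sup_le_sup h.le
      (le_inf (hperp.trans (orthogonal_le inf_le_left)) (F.inf_orthogonal_le hV))
  exact eq_of_le_of_finrank_eq hle (by rw [hV.isDim.2, hP.2])

end IsCompatibleCodimTwo

/-- Let `X, Y` be compatible `k`-dimensional subspaces of `H` with `dim (X ∩ Y) = k - 2`.
Then for every `k`-dimensional subspace `Z` ortho-adjacent to both `X, Y` there are precisely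
two `k`-dimensional subspaces of `H` ortho-adjacent to each of `X, Y, Z`. -/
theorem ncard_orthoAdjacent_to_triple_eq_two
    (k : ℕ) (hk : 2 ≤ k) (X Y : Submodule ℂ H) (hX : IsDim k X) (hY : IsDim k Y)
    (hcomp : Compatible X Y) (hint : Module.finrank ℂ ↥(X ⊓ Y) = k - 2)
    (Z : Submodule ℂ H) (hZ : IsDim k Z)
    (hZX : OrthoAdjacent k Z X) (hZY : OrthoAdjacent k Z Y) :
    {Z' : Submodule ℂ H | IsDim k Z' ∧ OrthoAdjacent k Z' X ∧ OrthoAdjacent k Z' Y ∧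
      OrthoAdjacent k Z' Z}.ncard = 2 := by
  have F : IsCompatibleCodimTwo k X Y := ⟨hk, hX, hY, hcomp, hint⟩
  have hZ' : IsCommonOrthoNeighbour k X Y Z := ⟨hZ, hZX, hZY⟩
  have hP := F.isCommonOrthoNeighbour_orthoPartner hZ'
  have hP' := (F.symm.isCommonOrthoNeighbour_orthoPartner hZ'.symm).symm
  have hset : {Z' : Submodule ℂ H | IsDim k Z' ∧ OrthoAdjacent k Z' X ∧ OrthoAdjacent k Z' Y ∧
      OrthoAdjacent k Z' Z} = {orthoPartner X Y Z, orthoPartner Y X Z} := by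
    ext V
    constructor
    · rintro ⟨hV, hVX, hVY, hVZ⟩
      have hV' : IsCommonOrthoNeighbour k X Y V := ⟨hV, hVX, hVY⟩
      rcases F.inf_eq_or_inf_eq hV' hZ' hVZ with h | h
      · exact Or.inl (F.eq_orthoPartner_of_inf_eq hV' hZ' hVZ h)
      · exact Or.inr (F.symm.eq_orthoPartner_of_inf_eq hV'.symm hZ'.symm hVZ h)
    · rintro (rfl | rfl)
      · exact ⟨hP.isDim, hP.left, hP.right, F.orthoAdjacent_orthoPartner hZ'⟩
      · exact ⟨hP'.isDim, hP'.left, hP'.right, F.symm.orthoAdjacent_orthoPartner hZ'.symm⟩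
  rw [hset, Set.ncard_pair (F.orthoPartner_ne hZ')]
end
end

section
/- Let H be a complex Hilbert space, let G(σ,d) be the conjugacy class of finite-rank self-adjoint operators with spectrum σ = {a_1, ..., a_k} and eigenspace dimensions d = {n_1, ..., n_k}, and let A, B ∈ G(σ,d) be operators that are not commutatively adjacent and such that, for two distinct indices i, j, the a_t-eigenspaces of A and B coincide for every t ≠ i, j while the a_i-eigenspaces of A and B are distinct and the a_j-eigenspaces of A and B are distinct. Then every C ∈ G(σ,d) that is commutatively adjacent to both A and B is commutatively (i,j)-adjacent to A and commutatively (i,j)-adjacent to B. -/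
noncomputable section

open scoped Classical

variable {H : Type*} [NormedAddCommGroup H] [InnerProductSpace ℂ H] [CompleteSpace H]

/-- The eigenspace of a bounded operator `A` for a real eigenvalue `μ`. -/
def eigSp (A : H →L[ℂ] H) (μ : ℝ) : Submodule ℂ H :=
  Module.End.eigenspace (A : H →ₗ[ℂ] H) (μ : ℂ)

/-- `A` belongs to the `(σ, d)`-Grassmannian `G(σ, d)`: `A` is a bounded self-adjoint
finite-rank operator whose eigenspace for the eigenvalue `a i` has dimension `n i`, these
eigenspaces being mutually orthogonal with sum dense in `H`. -/
def MemClass (k : ℕ) (a : Fin k → ℝ) (n : Fin k → Cardinal) (A : H →L[ℂ] H) : Prop :=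
  IsSelfAdjoint A ∧ FiniteDimensional ℂ ↥(LinearMap.range (A : H →ₗ[ℂ] H)) ∧
  (∀ i, Module.rank ℂ ↥(eigSp A (a i)) = n i) ∧
  (∀ i j : Fin k, i ≠ j → eigSp A (a i) ⟂ eigSp A (a j)) ∧
  (⨆ i, eigSp A (a i)).topologicalClosure = ⊤

/-- `A` and `B` are commutatively adjacent: they commute and `rank (A - B) = 2`. -/
def CommAdj (A B : H →L[ℂ] H) : Prop :=
  Commute A B ∧ Module.rank ℂ ↥(LinearMap.range ((A - B : H →L[ℂ] H) : H →ₗ[ℂ] H)) = 2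

/-- The graph `Γ^c(σ, d)` on the conjugacy class `G(σ, d)`: two operators are connected by an
edge if they are commutatively adjacent. -/
def commGraph (H : Type*) [NormedAddCommGroup H] [InnerProductSpace ℂ H] [CompleteSpace H]
    (k : ℕ) (a : Fin k → ℝ) (n : Fin k → Cardinal) :
    SimpleGraph {A : H →L[ℂ] H // MemClass k a n A} where
  Adj A B := A ≠ B ∧ CommAdj A.1 B.1
  symm := ⟨by
    rintro A B ⟨hne, hc, hr⟩
    refine ⟨hne.symm, hc.symm, ?_⟩
    have h : ((B.1 - A.1 : H →L[ℂ] H) : H →ₗ[ℂ] H) = -((A.1 - B.1 : H →L[ℂ] H) : H →ₗ[ℂ] H) := by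
      ext x; simp
    rw [h, LinearMap.range_neg]
    exact hr⟩
  loopless := ⟨fun A h => h.1 rfl⟩

/-- `A` and `B` are `(i, j)`-adjacent: their `a t`-eigenspaces coincide for every `t ≠ i, j`,
and their `a i`-eigenspaces (and likewise their `a j`-eigenspaces) are adjacent, i.e. the
intersection of the `a i`-eigenspaces has dimension `n i - 1`. -/
def IJAdj (k : ℕ) (a : Fin k → ℝ) (n : Fin k → Cardinal) (i j : Fin k)
    (A B : H →L[ℂ] H) : Prop :=
  (∀ t, t ≠ i → t ≠ j → eigSp A (a t) = eigSp B (a t)) ∧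
  Module.rank ℂ ↥(eigSp A (a i) ⊓ eigSp B (a i)) + 1 = n i ∧
  Module.rank ℂ ↥(eigSp A (a j) ⊓ eigSp B (a j)) + 1 = n j

/-- `A` and `B` are commutatively `(i, j)`-adjacent: they are `(i, j)`-adjacent and commute. -/
def CommIJAdj (k : ℕ) (a : Fin k → ℝ) (n : Fin k → Cardinal) (i j : Fin k)
    (A B : H →L[ℂ] H) : Prop :=
  Commute A B ∧ IJAdj k a n i j A B

/-!
Commuting operators `C`, `A` of the class split `H` into the orthogonal joint eigenspaces
`D s t = E_C(a s) ⊓ E_A(a t)`, on which `C - A` acts as the scalar `a s - a t`. Hence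
`rank (C - A) = 2` says that the off-diagonal ranks `m s t = rank D s t` add up to `2`. Both row `s`
and column `s` of `m`, together with the diagonal block `rank D s s`, add up to `n s`; the diagonal
block has finite rank unless `a s = 0`, which happens for at most one `s`, so rows and columns of
`m` have equal sums, and `m` is the matrix of a transposition `(p q)`. Thus `C` and `A` are
`(p, q)`-adjacent with `D p q ≠ 0 ≠ D q p`. The pairs found for `C, A` and for `C, B` must both be
`{i, j}`: otherwise `A` and `B` would agree at `i` or at `j`.
-/

open Function

theorem Submodule.IsOrtho.isClosed_sup {𝕜 E : Type*} [RCLike 𝕜] [NormedAddCommGroup E]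
    [InnerProductSpace 𝕜 E] {U V : Submodule 𝕜 E} [U.HasOrthogonalProjection] (hUV : U ⟂ V)
    (hV : IsClosed (V : Set E)) : IsClosed ((U ⊔ V : Submodule 𝕜 E) : Set E) := by
  -- `x ∈ U ⊔ V` exactly when the component of `x` orthogonal to `U` lies in `V`
  have : ((U ⊔ V : Submodule 𝕜 E) : Set E) = (fun x => x - U.starProjection x) ⁻¹' V := by
    ext x
    constructor
    · intro hx
      obtain ⟨u, hu, v, hv, rfl⟩ := Submodule.mem_sup.1 hx
      simpa [Submodule.starProjection_eq_self_iff.2 hu,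
        (U.starProjection_apply_eq_zero_iff).2 (hUV.symm.le hv)] using hv
    · intro hx
      simpa using Submodule.add_mem_sup (U.starProjection_apply_mem x) hx
  rw [this]
  exact hV.preimage (by fun_prop)

theorem isClosed_iSup_of_pairwise_isOrtho {𝕜 E ι : Type*} [RCLike 𝕜] [NormedAddCommGroup E]
    [InnerProductSpace 𝕜 E] [CompleteSpace E] [Finite ι] {V : ι → Submodule 𝕜 E}
    (hV : ∀ i, IsClosed (V i : Set E)) (horth : Pairwise ((· ⟂ ·) on V)) :
    IsClosed ((⨆ i, V i : Submodule 𝕜 E) : Set E) := by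
  have := Fintype.ofFinite ι
  suffices ∀ s : Finset ι, IsClosed ((⨆ i ∈ s, V i : Submodule 𝕜 E) : Set E) by
    simpa using this Finset.univ
  intro s
  induction s using Finset.induction_on with
  | empty => simp
  | insert i s hi ih =>
    have : CompleteSpace (V i) := (hV i).completeSpace_coe
    rw [Finset.iSup_insert]
    refine Submodule.IsOrtho.isClosed_sup ?_ ih
    simp only [Submodule.isOrtho_iSup_right]
    exact fun j hj => horth (ne_of_mem_of_not_mem hj hi).symm

theorem pairwise_isOrtho_inf {𝕜 E ι : Type*} [RCLike 𝕜] [NormedAddCommGroup E]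
    [InnerProductSpace 𝕜 E] {X Y : ι → Submodule 𝕜 E} (hX : Pairwise ((· ⟂ ·) on X))
    (hY : Pairwise ((· ⟂ ·) on Y)) : Pairwise ((· ⟂ ·) on fun x : ι × ι => X x.1 ⊓ Y x.2) := by
  intro x y hxy
  by_cases h : x.1 = y.1
  · exact (hY fun h' => hxy (Prod.ext h h')).mono inf_le_right inf_le_right
  · exact (hX h).mono inf_le_left inf_le_left

theorem rank_iSup_of_iSupIndep {K M ι : Type*} [DivisionRing K] [AddCommGroup M] [Module K M]
    [Fintype ι] {V : ι → Submodule K M} (hV : iSupIndep V) :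
    Module.rank K ↥(⨆ i, V i) = ∑ i, Module.rank K ↥(V i) := by
  suffices ∀ s : Finset ι, Module.rank K ↥(⨆ i ∈ s, V i) = ∑ i ∈ s, Module.rank K ↥(V i) by
    rw [← this Finset.univ, show (⨆ i ∈ Finset.univ, V i) = ⨆ i, V i by simp]
  intro s
  induction s using Finset.induction_on with
  | empty => simp
  | insert i s hi ih =>
    have hdisj : V i ⊓ (⨆ j ∈ s, V j) = ⊥ := (hV.disjoint_biSup hi).eq_bot
    have := Submodule.rank_sup_add_rank_inf_eq (V i) (⨆ j ∈ s, V j)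
    rw [hdisj, rank_bot, add_zero] at this
    rw [Finset.iSup_insert, Finset.sum_insert hi, this, ih]

theorem Module.End.eigenspace_eq_iSup_inf_of_mapsTo {R M ι : Type*} [CommRing R]
    [AddCommGroup M] [Module R M] [Fintype ι] {f : Module.End R M} {V : ι → Submodule R M}
    (hV : iSupIndep V) (htop : ⨆ i, V i = ⊤) (hf : ∀ i, Set.MapsTo f (V i) (V i)) (μ : R) :
    f.eigenspace μ = ⨆ i, f.eigenspace μ ⊓ V i := by
  refine le_antisymm (fun x hx => ?_) (iSup_le fun i => inf_le_left)
  obtain ⟨z, rfl⟩ := (Submodule.mem_iSup_finset_iff_exists_sum (s := Finset.univ) V x).1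
    (by simp [htop])
  -- `f - μ` preserves each `V i`, so independence splits `(f - μ) x = 0` componentwise
  have hz : ∀ i, f (z i) - μ • (z i : M) = 0 := by
    refine fun i => (iSupIndep_iff_finsetSum_eq_zero_imp_eq_zero V).1 hV Finset.univ
      (fun i => f (z i) - μ • (z i : M))
      (fun i _ => (V i).sub_mem (hf i (z i).2) ((V i).smul_mem μ (z i).2)) ?_ i
      (Finset.mem_univ i)
    rw [Finset.sum_sub_distrib, ← map_sum, ← Finset.smul_sum, sub_eq_zero]
    exact Module.End.mem_eigenspace_iff.1 hx
  exact Submodule.sum_mem _ fun i _ => Submodule.mem_iSup_of_mem i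
    ⟨Module.End.mem_eigenspace_iff.2 (sub_eq_zero.1 (hz i)), (z i).2⟩

section Eigenspaces

variable {E : Type*} [NormedAddCommGroup E] [InnerProductSpace ℂ E]
  {k : ℕ} {a : Fin k → ℝ} {n : Fin k → Cardinal} {i j p q : Fin k}

lemma mem_eigSp {A : E →L[ℂ] E} {μ : ℝ} {x : E} : x ∈ eigSp A μ ↔ A x = (μ : ℂ) • x :=
  Module.End.mem_eigenspace_iff

lemma isClosed_eigSp (A : E →L[ℂ] E) (μ : ℝ) : IsClosed (eigSp A μ : Set E) := by
  have : eigSp A μ =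
      LinearMap.ker ((A - (μ : ℂ) • ContinuousLinearMap.id ℂ E : E →L[ℂ] E) : E →ₗ[ℂ] E) := by
    ext x
    simp [mem_eigSp, sub_eq_zero]
  rw [this]
  exact ContinuousLinearMap.isClosed_ker _

lemma eigSp_le_range (A : E →L[ℂ] E) {μ : ℝ} (hμ : μ ≠ 0) :
    eigSp A μ ≤ LinearMap.range (A : E →ₗ[ℂ] E) := fun x hx =>
  ⟨(μ : ℂ)⁻¹ • x, by
    rw [map_smul, ContinuousLinearMap.coe_coe, mem_eigSp.1 hx, smul_smul,
      inv_mul_cancel₀ (by exact_mod_cast hμ), one_smul]⟩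

lemma Commute.mapsTo_eigSp {A C : E →L[ℂ] E} (h : Commute A C) (μ : ℝ) :
    Set.MapsTo A (eigSp C μ) (eigSp C μ) :=
  Module.End.mapsTo_genEigenspace_of_comm (h.symm.map ContinuousLinearMap.toLinearMapRingHom) _ 1

lemma sub_apply_of_mem_eigSp_inf_eigSp {C A : E →L[ℂ] E} {μ ν : ℝ} {x : E}
    (hx : x ∈ eigSp C μ ⊓ eigSp A ν) : (C - A) x = ((μ : ℂ) - ν) • x := by
  rw [sub_apply, mem_eigSp.1 hx.1, mem_eigSp.1 hx.2, sub_smul]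

lemma map_sub_eigSp_inf_eigSp (C A : E →L[ℂ] E) (μ ν : ℝ) :
    (eigSp C μ ⊓ eigSp A ν).map ((C - A : E →L[ℂ] E) : E →ₗ[ℂ] E) =
      if μ = ν then ⊥ else eigSp C μ ⊓ eigSp A ν := by
  split_ifs with hμν
  · subst hμν
    rw [eq_bot_iff]
    rintro _ ⟨x, hx, rfl⟩
    rw [ContinuousLinearMap.coe_coe, sub_apply_of_mem_eigSp_inf_eigSp hx, sub_self, zero_smul]
    exact Submodule.zero_mem _
  · have hne : (μ : ℂ) - ν ≠ 0 := sub_ne_zero.2 (by exact_mod_cast hμν)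
    refine le_antisymm ?_ fun x hx => ⟨((μ : ℂ) - ν)⁻¹ • x, Submodule.smul_mem _ _ hx, ?_⟩
    · rintro _ ⟨x, hx, rfl⟩
      rw [ContinuousLinearMap.coe_coe, sub_apply_of_mem_eigSp_inf_eigSp hx]
      exact Submodule.smul_mem _ _ hx
    · rw [ContinuousLinearMap.coe_coe,
        sub_apply_of_mem_eigSp_inf_eigSp (Submodule.smul_mem _ _ hx), smul_smul,
        mul_inv_cancel₀ hne, one_smul]

lemma rank_eigSp_inf_eigSp_lt_aleph0 {C A : E →L[ℂ] E} (ha : Function.Injective a) (hCA : CommAdj C A)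
    {s t : Fin k} (hst : s ≠ t) :
    Module.rank ℂ ↥(eigSp C (a s) ⊓ eigSp A (a t)) < Cardinal.aleph0 := by
  have hle : eigSp C (a s) ⊓ eigSp A (a t) ≤
      LinearMap.range ((C - A : E →L[ℂ] E) : E →ₗ[ℂ] E) := by
    calc eigSp C (a s) ⊓ eigSp A (a t)
        = (eigSp C (a s) ⊓ eigSp A (a t)).map ((C - A : E →L[ℂ] E) : E →ₗ[ℂ] E) := by
          rw [map_sub_eigSp_inf_eigSp, if_neg (ha.ne hst)]
      _ ≤ _ := LinearMap.map_le_range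
  exact (Submodule.rank_mono hle).trans_lt (hCA.2 ▸ Cardinal.natCast_lt_aleph0)

lemma IJAdj.swap {A B : E →L[ℂ] E} (h : IJAdj k a n i j A B) : IJAdj k a n j i A B :=
  ⟨fun t htj hti => h.1 t hti htj, h.2.2, h.2.1⟩

lemma IJAdj.of_mem_pair {A B : E →L[ℂ] E} (h : IJAdj k a n p q A B) (hpq : p ≠ q) (hp : p = i ∨ p = j)
    (hq : q = i ∨ q = j) : IJAdj k a n i j A B := by
  rcases hp with rfl | rfl <;> rcases hq with rfl | rfl
  exacts [absurd rfl hpq, h, h.swap, absurd rfl hpq]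

namespace MemClass

variable [CompleteSpace E] {A : E →L[ℂ] E}

lemma pairwise_isOrtho (hA : MemClass k a n A) :
    Pairwise ((· ⟂ ·) on fun i => eigSp A (a i)) :=
  fun i j h => hA.2.2.2.1 i j h

lemma iSupIndep_eigSp (hA : MemClass k a n A) : iSupIndep fun i => eigSp A (a i) :=
  (OrthogonalFamily.of_pairwise hA.pairwise_isOrtho).independent

lemma iSup_eigSp_eq_top (hA : MemClass k a n A) : ⨆ i, eigSp A (a i) = ⊤ := by
  rw [← (isClosed_iSup_of_pairwise_isOrtho (fun i => isClosed_eigSp A (a i))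
    hA.pairwise_isOrtho).submodule_topologicalClosure_eq]
  exact hA.2.2.2.2

lemma rank_eigSp_lt_aleph0 (hA : MemClass k a n A) {μ : ℝ} (hμ : μ ≠ 0) :
    Module.rank ℂ ↥(eigSp A μ) < Cardinal.aleph0 :=
  have : FiniteDimensional ℂ ↥(LinearMap.range (A : E →ₗ[ℂ] E)) := hA.2.1
  (Submodule.rank_mono (eigSp_le_range A hμ)).trans_lt (Module.rank_lt_aleph0 ℂ _)

lemma pairwise_disjoint (hA : MemClass k a n A) :
    Pairwise (Disjoint on fun t => eigSp A (a t)) :=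
  hA.pairwise_isOrtho.mono fun _ _ h => h.disjoint

end MemClass

end Eigenspaces

section Combinatorics

variable {ι : Type*} [Fintype ι]

lemma eq_one_of_sum_eq_two {f : ι → ℕ} (hf : ∑ z, f z = 2) {x y : ι} (hxy : x ≠ y)
    (hx : f x ≠ 0) (hy : f y ≠ 0) : f x = 1 ∧ f y = 1 ∧ ∀ z, z ≠ x → z ≠ y → f z = 0 := by
  have hsplit : f x + f y + ∑ z ∈ (Finset.univ.erase x).erase y, f z = 2 := by
    rw [add_assoc, Finset.add_sum_erase _ _ (Finset.mem_erase.2 ⟨hxy.symm, Finset.mem_univ y⟩),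
      Finset.add_sum_erase _ _ (Finset.mem_univ x), hf]
  refine ⟨by omega, by omega, fun z hzx hzy => ?_⟩
  have := Finset.single_le_sum (f := f) (fun _ _ => Nat.zero_le _)
    (Finset.mem_erase.2 ⟨hzy, Finset.mem_erase.2 ⟨hzx, Finset.mem_univ z⟩⟩)
  omega

lemma sum_row_eq_sum_col_of_subsingleton {m : ι → ι → ℕ}
    (h : {r | ∑ t, m r t ≠ ∑ s, m s r}.Subsingleton) (r : ι) :
    ∑ t, m r t = ∑ s, m s r := by
  by_contra hr
  have hrest : ∑ r' ∈ Finset.univ.erase r, ∑ t, m r' t = ∑ r' ∈ Finset.univ.erase r, ∑ s, m s r' :=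
    Finset.sum_congr rfl fun r' hr' => by_contra fun h' => Finset.ne_of_mem_erase hr' (h h' hr)
  have htotal : ∑ r', ∑ t, m r' t = ∑ r', ∑ s, m s r' := Finset.sum_comm
  rw [← Finset.add_sum_erase _ _ (Finset.mem_univ r), hrest,
    ← Finset.add_sum_erase _ (fun r' => ∑ s, m s r') (Finset.mem_univ r)] at htotal
  exact hr (Nat.add_right_cancel htotal)

lemma exists_pair_of_sum_eq_two {m : ι → ι → ℕ} (hdiag : ∀ s, m s s = 0)
    (hbal : ∀ r, ∑ t, m r t = ∑ s, m s r) (hsum : ∑ x : ι × ι, m x.1 x.2 = 2) :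
    ∃ p q, p ≠ q ∧ m p q = 1 ∧ m q p = 1 ∧
      ∀ s t, (s, t) ≠ (p, q) → (s, t) ≠ (q, p) → m s t = 0 := by
  obtain ⟨⟨p, q⟩, -, hpq⟩ := Finset.exists_ne_zero_of_sum_ne_zero (hsum ▸ two_ne_zero)
  have hpq' : p ≠ q := by rintro rfl; exact hpq (hdiag p)
  have hrow_ne : ∀ {r t}, m r t ≠ 0 → ∑ t', m r t' ≠ 0 := fun h =>
    (Nat.pos_of_ne_zero h |>.trans_le (Finset.single_le_sum (fun _ _ => Nat.zero_le _)
      (Finset.mem_univ _))).ne'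
  have hcol_ne : ∀ {s r}, m s r ≠ 0 → ∑ s', m s' r ≠ 0 := fun h =>
    (Nat.pos_of_ne_zero h |>.trans_le (Finset.single_le_sum (f := fun s => m s _)
      (fun _ _ => Nat.zero_le _) (Finset.mem_univ _))).ne'
  obtain ⟨s, -, hsp⟩ := Finset.exists_ne_zero_of_sum_ne_zero (hbal p ▸ hrow_ne hpq)
  obtain ⟨hpq1, hsp1, hzero⟩ := eq_one_of_sum_eq_two (f := fun x : ι × ι => m x.1 x.2) hsum
    (x := (p, q)) (y := (s, p)) (fun h => hpq' (Prod.ext_iff.1 h).2.symm) hpq hsp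
  obtain ⟨t, -, hqt⟩ := Finset.exists_ne_zero_of_sum_ne_zero ((hbal q).symm ▸ hcol_ne hpq)
  obtain rfl : s = q := by
    by_contra hsq
    exact hqt (hzero (q, t) (fun h => hpq' (Prod.ext_iff.1 h).1.symm)
      (fun h => hsq (Prod.ext_iff.1 h).1.symm))
  exact ⟨p, s, hpq', hpq1, hsp1, fun s' t' h h' => hzero (s', t') h h'⟩

lemma Fintype.sum_eq_add_sum_of_eq_off {M : Type*} [DecidableEq ι]
    [AddCommMonoid M] {f g : ι → M} (r : ι) (hg : g r = 0) (hfg : ∀ t, t ≠ r → f t = g t) :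
    ∑ t, f t = f r + ∑ t, g t := by
  rw [Fintype.sum_eq_add_sum_compl r f, Fintype.sum_eq_add_sum_compl r g, hg, zero_add]
  exact congrArg _ (Finset.sum_congr rfl fun t ht => hfg t (by simpa using ht))

end Combinatorics

section PairsOfIndices

variable {α ι : Type*} [Lattice α] [OrderBot α] {X Y Z : ι → α}

lemma mem_pair_of_not_disjoint (hX : Pairwise (Disjoint on X)) (hY : Pairwise (Disjoint on Y))
    {p q s t : ι} (hXY : ∀ u, u ≠ p → u ≠ q → X u = Y u) (hst : s ≠ t)
    (h : ¬Disjoint (X s) (Y t)) : (s = p ∨ s = q) ∧ (t = p ∨ t = q) := by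
  constructor
  · by_contra! hs
    exact h (by rw [hXY s hs.1 hs.2]; exact hY hst)
  · by_contra! ht
    exact h (by rw [← hXY t ht.1 ht.2]; exact hX hst)

lemma eq_or_eq_of_agree_off_pairs (hX : Pairwise (Disjoint on X)) (hZ : Pairwise (Disjoint on Z))
    {i j p q p' q' : ι} (hij : i ≠ j) (hYZ : ∀ t, t ≠ i → t ≠ j → Y t = Z t) (hi : Y i ≠ Z i)
    (hj : Y j ≠ Z j) (hpq : p ≠ q) (hXY : ∀ t, t ≠ p → t ≠ q → X t = Y t)
    (hqp : ¬Disjoint (X q) (Y p)) (hXZ : ∀ t, t ≠ p' → t ≠ q' → X t = Z t) : p = i ∨ p = j := by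
  by_contra! hp
  obtain ⟨hq', hp'⟩ :=
    mem_pair_of_not_disjoint hX hZ hXZ hpq.symm (by rwa [← hYZ p hp.1 hp.2])
  -- `p ≠ q` both lie in `{p', q'}`, so `Y` and `Z` agree with `X`, hence with each other,
  -- away from `p` and `q`
  have hYZ' : ∀ t, t ≠ p → t ≠ q → Y t = Z t := fun t htp htq =>
    (hXY t htp htq).symm.trans (hXZ t (by grind) (by grind))
  have hiq : i = q := by_contra fun h => hi (hYZ' i (Ne.symm hp.1) h)
  have hjq : j = q := by_contra fun h => hj (hYZ' j (Ne.symm hp.2) h)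
  exact hij (hiq.trans hjq.symm)

end PairsOfIndices

section JointEigenspaces

variable {E : Type*} [NormedAddCommGroup E] [InnerProductSpace ℂ E] [CompleteSpace E]
  {k : ℕ} {a : Fin k → ℝ} {n : Fin k → Cardinal} {A B C : E →L[ℂ] E} {i j p q : Fin k}

lemma eigSp_eq_iSup_inf_eigSp (hA : MemClass k a n A) (h : Commute C A) (μ : ℝ) :
    eigSp C μ = ⨆ t, eigSp C μ ⊓ eigSp A (a t) :=
  Module.End.eigenspace_eq_iSup_inf_of_mapsTo hA.iSupIndep_eigSp hA.iSup_eigSp_eq_top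
    (fun t => h.mapsTo_eigSp (a t)) μ

lemma iSup_eigSp_inf_eigSp_eq_top (hC : MemClass k a n C) (hA : MemClass k a n A)
    (h : Commute C A) : ⨆ x : Fin k × Fin k, eigSp C (a x.1) ⊓ eigSp A (a x.2) = ⊤ := by
  rw [iSup_prod]
  simp_rw [← eigSp_eq_iSup_inf_eigSp hA h]
  exact hC.iSup_eigSp_eq_top

lemma rank_eigSp_eq_sum (hC : MemClass k a n C) (hA : MemClass k a n A) (h : Commute C A)
    (s : Fin k) : n s = ∑ t, Module.rank ℂ ↥(eigSp C (a s) ⊓ eigSp A (a t)) := by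
  rw [← hC.2.2.1 s, ← rank_iSup_of_iSupIndep, ← eigSp_eq_iSup_inf_eigSp hA h]
  exact (OrthogonalFamily.of_pairwise fun t t' htt' =>
    (hA.pairwise_isOrtho htt').mono inf_le_right inf_le_right).independent

lemma rank_range_sub_eq_sum (ha : Function.Injective a) (hC : MemClass k a n C)
    (hA : MemClass k a n A) (h : Commute C A) :
    Module.rank ℂ ↥(LinearMap.range ((C - A : E →L[ℂ] E) : E →ₗ[ℂ] E)) =
      ∑ x : Fin k × Fin k,
        if x.1 = x.2 then 0 else Module.rank ℂ ↥(eigSp C (a x.1) ⊓ eigSp A (a x.2)) := by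
  rw [LinearMap.range_eq_map, ← iSup_eigSp_inf_eigSp_eq_top hC hA h]
  have hmap : ∀ x : Fin k × Fin k,
      (eigSp C (a x.1) ⊓ eigSp A (a x.2)).map ((C - A : E →L[ℂ] E) : E →ₗ[ℂ] E) =
        if x.1 = x.2 then ⊥ else eigSp C (a x.1) ⊓ eigSp A (a x.2) := fun x => by
    simp only [map_sub_eigSp_inf_eigSp, ha.eq_iff]
  rw [Submodule.map_iSup, iSup_congr hmap, rank_iSup_of_iSupIndep]
  · exact Finset.sum_congr rfl fun x _ => by
      rw [apply_ite (fun S : Submodule ℂ E => Module.rank ℂ S), rank_bot]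
  · refine (OrthogonalFamily.of_pairwise fun x y hxy => ?_).independent
    have hle : ∀ x : Fin k × Fin k,
        (if x.1 = x.2 then ⊥ else eigSp C (a x.1) ⊓ eigSp A (a x.2)) ≤
          eigSp C (a x.1) ⊓ eigSp A (a x.2) := fun x => by split_ifs <;> simp
    exact (pairwise_isOrtho_inf hC.pairwise_isOrtho hA.pairwise_isOrtho hxy).mono
      (hle x) (hle y)

lemma eigSp_le_eigSp_of_inf_eq_bot (hA : MemClass k a n A) (h : Commute C A) {t : Fin k}
    (hbot : ∀ s, s ≠ t → eigSp C (a t) ⊓ eigSp A (a s) = ⊥) : eigSp C (a t) ≤ eigSp A (a t) := by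
  rw [eigSp_eq_iSup_inf_eigSp hA h]
  refine iSup_le fun s => ?_
  by_cases hs : s = t
  · exact hs ▸ inf_le_right
  · exact (hbot s hs).le.trans bot_le

lemma CommAdj.exists_pair_rank_eq_one (ha : Function.Injective a) (hC : MemClass k a n C)
    (hA : MemClass k a n A) (hCA : CommAdj C A) :
    ∃ p q, p ≠ q ∧ Module.rank ℂ ↥(eigSp C (a p) ⊓ eigSp A (a q)) = 1 ∧
      Module.rank ℂ ↥(eigSp C (a q) ⊓ eigSp A (a p)) = 1 ∧
      ∀ s t, s ≠ t → (s, t) ≠ (p, q) → (s, t) ≠ (q, p) → eigSp C (a s) ⊓ eigSp A (a t) = ⊥ := by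
  let m : Fin k → Fin k → ℕ := fun s t =>
    if s = t then 0 else (Module.rank ℂ ↥(eigSp C (a s) ⊓ eigSp A (a t))).toNat
  have hm : ∀ s t, (m s t : Cardinal) =
      if s = t then 0 else Module.rank ℂ ↥(eigSp C (a s) ⊓ eigSp A (a t)) := by
    intro s t
    by_cases hst : s = t
    · simp [m, hst]
    · simp [m, hst, Cardinal.cast_toNat_of_lt_aleph0 (rank_eigSp_inf_eigSp_lt_aleph0 ha hCA hst)]
  have hsum : ∑ x : Fin k × Fin k, m x.1 x.2 = 2 := by
    have : ((∑ x : Fin k × Fin k, m x.1 x.2 : ℕ) : Cardinal) = 2 := by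
      rw [Nat.cast_sum, Finset.sum_congr rfl fun x _ => hm x.1 x.2,
        ← rank_range_sub_eq_sum ha hC hA hCA.1, hCA.2]
    exact_mod_cast this
  have hrow : ∀ r, n r = Module.rank ℂ ↥(eigSp C (a r) ⊓ eigSp A (a r)) + ↑(∑ t, m r t) := by
    intro r
    rw [rank_eigSp_eq_sum hC hA hCA.1 r, Nat.cast_sum]
    exact Fintype.sum_eq_add_sum_of_eq_off r (by simp [m]) fun t ht => by
      rw [hm, if_neg (Ne.symm ht)]
  have hcol : ∀ r, n r = Module.rank ℂ ↥(eigSp C (a r) ⊓ eigSp A (a r)) + ↑(∑ s, m s r) := by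
    intro r
    rw [rank_eigSp_eq_sum hA hC hCA.1.symm r, Nat.cast_sum, inf_comm]
    exact Fintype.sum_eq_add_sum_of_eq_off r (by simp [m]) fun s hs => by
      rw [hm, if_neg hs, inf_comm]
  -- rows and columns can only be unbalanced where the diagonal block has infinite rank,
  -- which forces the eigenvalue `0`
  have hbal : ∀ r, ∑ t, m r t = ∑ s, m s r := by
    refine sum_row_eq_sum_col_of_subsingleton <|
      ((Set.subsingleton_singleton (a := (0 : ℝ))).preimage ha).anti fun r hr => ?_
    by_contra har
    have hfin : Module.rank ℂ ↥(eigSp C (a r) ⊓ eigSp A (a r)) < Cardinal.aleph0 :=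
      (Submodule.rank_mono inf_le_left).trans_lt (hC.rank_eigSp_lt_aleph0 har)
    exact hr (by exact_mod_cast Cardinal.eq_of_add_eq_add_left ((hrow r).symm.trans (hcol r)) hfin)
  obtain ⟨p, q, hpq, hpq1, hqp1, hzero⟩ := exists_pair_of_sum_eq_two (by simp [m]) hbal hsum
  refine ⟨p, q, hpq, ?_, ?_, fun s t hst h1 h2 => Submodule.rank_eq_zero.1 ?_⟩
  · simpa [hpq, hpq1] using (hm p q).symm
  · simpa [hpq.symm, hqp1] using (hm q p).symm
  · simpa [hst, hzero s t h1 h2] using (hm s t).symm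

lemma CommAdj.exists_ijAdj (ha : Function.Injective a) (hC : MemClass k a n C)
    (hA : MemClass k a n A) (hCA : CommAdj C A) :
    ∃ p q, p ≠ q ∧ IJAdj k a n p q C A ∧ ¬Disjoint (eigSp C (a p)) (eigSp A (a q)) ∧
      ¬Disjoint (eigSp C (a q)) (eigSp A (a p)) := by
  obtain ⟨p, q, hpq, hpq1, hqp1, hzero⟩ := hCA.exists_pair_rank_eq_one ha hC hA
  have hnd : ∀ {s t}, Module.rank ℂ ↥(eigSp C (a s) ⊓ eigSp A (a t)) = 1 →
      ¬Disjoint (eigSp C (a s)) (eigSp A (a t)) := fun h hd =>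
    one_ne_zero (h.symm.trans (Submodule.rank_eq_zero.2 hd.eq_bot))
  have hdiag : ∀ {r r'}, r ≠ r' → (∀ t, t ≠ r → t ≠ r' → eigSp C (a r) ⊓ eigSp A (a t) = ⊥) →
      Module.rank ℂ ↥(eigSp C (a r) ⊓ eigSp A (a r')) = 1 →
      Module.rank ℂ ↥(eigSp C (a r) ⊓ eigSp A (a r)) + 1 = n r := fun hrr' hbot h1 => by
    rw [rank_eigSp_eq_sum hC hA hCA.1, Fintype.sum_eq_add _ _ hrr' fun t ht => by
      rw [hbot t ht.1 ht.2, rank_bot], h1]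
  refine ⟨p, q, hpq, ⟨fun t htp htq => le_antisymm ?_ ?_, hdiag hpq ?_ hpq1, hdiag hpq.symm ?_ hqp1⟩,
    hnd hpq1, hnd hqp1⟩
  · exact eigSp_le_eigSp_of_inf_eq_bot hA hCA.1 fun s hs =>
      hzero t s (Ne.symm hs) (by simp [htp]) (by simp [htq])
  · refine eigSp_le_eigSp_of_inf_eq_bot hC hCA.1.symm fun s hs => ?_
    rw [inf_comm]
    exact hzero s t hs (by simp [htq]) (by simp [htp])
  · exact fun t htp htq => hzero p t (Ne.symm htp) (by simp [htq]) (by simp [hpq])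
  · exact fun t htq htp => hzero q t (Ne.symm htq) (by simp [hpq.symm]) (by simp [htp])

lemma IJAdj.ijAdj_of_agree_off (hC : MemClass k a n C) (hB : MemClass k a n B) (hij : i ≠ j)
    (ht : ∀ t, t ≠ i → t ≠ j → eigSp A (a t) = eigSp B (a t))
    (hi : eigSp A (a i) ≠ eigSp B (a i)) (hj : eigSp A (a j) ≠ eigSp B (a j))
    (hCA : IJAdj k a n p q C A) (hpq : p ≠ q) (hpq' : ¬Disjoint (eigSp C (a p)) (eigSp A (a q)))
    (hqp' : ¬Disjoint (eigSp C (a q)) (eigSp A (a p))) {p' q' : Fin k}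
    (hCB : ∀ t, t ≠ p' → t ≠ q' → eigSp C (a t) = eigSp B (a t)) : IJAdj k a n i j C A :=
  hCA.of_mem_pair hpq
    (eq_or_eq_of_agree_off_pairs hC.pairwise_disjoint hB.pairwise_disjoint hij ht hi hj hpq
      hCA.1 hqp' hCB)
    (eq_or_eq_of_agree_off_pairs hC.pairwise_disjoint hB.pairwise_disjoint hij ht hi hj
      hpq.symm (fun t htq htp => hCA.1 t htp htq) hpq' hCB)

end JointEigenspaces

theorem commAdj_to_both_is_ij_adjacent_general
    (k : ℕ) (a : Fin k → ℝ) (ha : Function.Injective a) (n : Fin k → Cardinal)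
    (A B : H →L[ℂ] H) (hA : MemClass k a n A) (hB : MemClass k a n B)
    (i j : Fin k) (hij : i ≠ j)
    (ht : ∀ t, t ≠ i → t ≠ j → eigSp A (a t) = eigSp B (a t))
    (hi : eigSp A (a i) ≠ eigSp B (a i)) (hj : eigSp A (a j) ≠ eigSp B (a j))
    (C : H →L[ℂ] H) (hC : MemClass k a n C)
    (hCA : CommAdj C A) (hCB : CommAdj C B) :
    CommIJAdj k a n i j C A ∧ CommIJAdj k a n i j C B := by
  obtain ⟨p, q, hpq, hadjA, hpqA, hqpA⟩ := hCA.exists_ijAdj ha hC hA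
  obtain ⟨p', q', hpq', hadjB, hpqB, hqpB⟩ := hCB.exists_ijAdj ha hC hB
  exact ⟨⟨hCA.1, hadjA.ijAdj_of_agree_off hC hB hij ht hi hj hpq hpqA hqpA hadjB.1⟩,
    ⟨hCB.1, hadjB.ijAdj_of_agree_off hC hA hij (fun t hti htj => (ht t hti htj).symm)
      (Ne.symm hi) (Ne.symm hj) hpq' hpqB hqpB hadjA.1⟩⟩

/-- Suppose `A, B ∈ G(σ, d)` are not commutatively adjacent, their `a t`-eigenspaces coincide
for every `t ≠ i, j`, and their `a i`-eigenspaces as well as their `a j`-eigenspaces differ.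
Then every `C ∈ G(σ, d)` commutatively adjacent to both `A, B` is commutatively
`(i, j)`-adjacent to both `A` and `B`. -/
theorem commAdj_to_both_is_ij_adjacent
    (k : ℕ) (a : Fin k → ℝ) (ha : Function.Injective a) (n : Fin k → Cardinal)
    (A B : H →L[ℂ] H) (hA : MemClass k a n A) (hB : MemClass k a n B)
    (i j : Fin k) (hij : i ≠ j)
    (ht : ∀ t, t ≠ i → t ≠ j → eigSp A (a t) = eigSp B (a t))
    (hi : eigSp A (a i) ≠ eigSp B (a i)) (hj : eigSp A (a j) ≠ eigSp B (a j))
    (hnadj : ¬ CommAdj A B)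
    (C : H →L[ℂ] H) (hC : MemClass k a n C)
    (hCA : CommAdj C A) (hCB : CommAdj C B) :
    CommIJAdj k a n i j C A ∧ CommIJAdj k a n i j C B :=
  commAdj_to_both_is_ij_adjacent_general k a ha n A B hA hB i j hij ht hi hj C hC hCA hCB

end
end
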